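/- Let F : I^op → Cat be a pseudofunctor on a small category I and define the rectification F^r : I^op → Cat by F^r(i) = ∫_{i/I} (F ∘ π_i), where π_i : i/I → I is the forgetful functor from the comma category, and with a* : F^r(i) → F^r(j) for a : j → i induced by precomposition with a. Then F^r is a strict functor: 1_i* = 1_{F^r(i)} and b* a* = (ab)* hold on the nose. -/

import Mathlib

open CategoryTheory CategoryTheory.Bicategory Opposite

universe v₂ u₂ v₁ u₁

namespace RectifyStmt

variable {I : Type u₁} [Category.{v₁} I]
variable (F : Pseudofunctor (LocallyDiscrete Iᵒᵖ) Cat.{v₂, u₂})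

/-- Objects of the rectification `F^r(i) = ∫_{i/I} (F ∘ π_i)`: pairs `(x, b : i → k)`
with `x ∈ F k`. -/
structure RObj (i : I) where
  tgt : I
  arr : i ⟶ tgt
  pt : F.obj ⟨op tgt⟩

variable {F}

/-- Morphisms `(u, d) : (y, c : i → l) → (x, b : i → k)` of `F^r(i)`: `d : l → k` with
`d ∘ c = b` and `u : y → d* x`. -/
structure RHom {i : I} (Y X : RObj F i) where
  d : Y.tgt ⟶ X.tgt
  w : Y.arr ≫ d = X.arr
  u : Y.pt ⟶ (F.map d.op.toLoc).toFunctor.obj X.pt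

/-- The functor `a* : F^r(i) → F^r(j)` induced by `a : j → i`, on objects:
precomposition with `a`. -/
def reindexObj {j i : I} (a : j ⟶ i) (X : RObj F i) : RObj F j :=
  ⟨X.tgt, a ≫ X.arr, X.pt⟩

/-- The functor `a* : F^r(i) → F^r(j)` on morphisms. -/
def reindexHom {j i : I} (a : j ⟶ i) {Y X : RObj F i} (f : RHom Y X) :
    RHom (reindexObj a Y) (reindexObj a X) :=
  ⟨f.d, by simp [reindexObj, f.w], f.u⟩

/- Reindexing only precomposes the structure arrow `i ⟶ k` and leaves the morphism data `(d, u)`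
untouched, so strictness comes from the unit and associativity laws of `I` alone: the coherence
isomorphisms of `F` never enter. -/

theorem RHom.hext {i : I} {Y Y' X X' : RObj F i} (hY : Y = Y') (hX : X = X')
    {f : RHom Y X} {f' : RHom Y' X'} (hd : f.d ≍ f'.d) (hu : f.u ≍ f'.u) : f ≍ f' := by
  subst hY hX
  obtain ⟨d, w, u⟩ := f
  obtain ⟨d', w', u'⟩ := f'
  cases eq_of_heq hd
  cases eq_of_heq hu
  rfl

@[simp]
theorem reindexObj_id {i : I} (X : RObj F i) : reindexObj (𝟙 i) X = X := by
  simp [reindexObj]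

@[simp]
theorem reindexObj_comp {k j i : I} (b : k ⟶ j) (a : j ⟶ i) (X : RObj F i) :
    reindexObj b (reindexObj a X) = reindexObj (b ≫ a) X := by
  simp [reindexObj]

theorem reindexHom_id {i : I} {Y X : RObj F i} (f : RHom Y X) : reindexHom (𝟙 i) f ≍ f :=
  RHom.hext (reindexObj_id Y) (reindexObj_id X) .rfl .rfl

theorem reindexHom_comp {k j i : I} (b : k ⟶ j) (a : j ⟶ i) {Y X : RObj F i} (f : RHom Y X) :
    reindexHom b (reindexHom a f) ≍ reindexHom (b ≫ a) f :=
  RHom.hext (reindexObj_comp b a Y) (reindexObj_comp b a X) .rfl .rfl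

/-- The rectification `F^r` of a pseudofunctor `F : I^op → Cat` is a *strict* functor:
`1_i* = 1_{F^r(i)}` and `b* a* = (ab)*` hold on the nose, both on objects and on
morphisms. -/
theorem rectification_is_strict (F : Pseudofunctor (LocallyDiscrete Iᵒᵖ) Cat.{v₂, u₂}) :
    -- strict unitality
    (∀ (i : I) (X : RObj F i), reindexObj (𝟙 i) X = X) ∧
    (∀ (i : I) (Y X : RObj F i) (f : RHom Y X), HEq (reindexHom (𝟙 i) f) f) ∧
    -- strict functoriality: `b* (a* X) = (ab)* X`
    (∀ (k j i : I) (b : k ⟶ j) (a : j ⟶ i) (X : RObj F i),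
      reindexObj b (reindexObj a X) = reindexObj (b ≫ a) X) ∧
    (∀ (k j i : I) (b : k ⟶ j) (a : j ⟶ i) (Y X : RObj F i) (f : RHom Y X),
      HEq (reindexHom b (reindexHom a f)) (reindexHom (b ≫ a) f)) :=
  ⟨fun _ => reindexObj_id, fun _ _ _ => reindexHom_id, fun _ _ _ => reindexObj_comp,
    fun _ _ _ b a _ _ => reindexHom_comp b a⟩

end RectifyStmt
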